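/- Let V̇_a = −(n'(V)/(1+n(V)))·[(L_{ḡ₁}V)² + (L_{g₂}V)²] where n is class K∞ and C¹ with n' > 0 on (0,∞). Then along the adaptive closed-loop, V̇_a ≤ 0, and V̇_a = 0 at points with ρ > 0 implies L_{ḡ₁}V = L_{g₂}V = 0, which implies (ρ,δ,γ) = (0,0,0). In particular V̇_a < 0 for all (ρ,δ,γ) ≠ (0,0,0) with ρ > 0. -/

import Mathlib

noncomputable def z (δ γ : ℝ) : ℝ := γ + (1 / 2) * Real.arctan (2 * δ)

noncomputable def V (ρ δ γ : ℝ) : ℝ := ρ ^ 2 + δ ^ 2 + (z δ γ) ^ 2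

noncomputable def Lg1V (ρ δ γ : ℝ) : ℝ :=
  -2 * (ρ ^ 2 * Real.cos γ -
    Real.sin γ * (δ + (1 + 1 / (1 + 4 * δ ^ 2)) * z δ γ))

noncomputable def Lg2V (δ γ : ℝ) : ℝ := -2 * z δ γ

noncomputable def Vadot (n : ℝ → ℝ) (ρ δ γ : ℝ) : ℝ :=
  -(deriv n (V ρ δ γ) / (1 + n (V ρ δ γ))) *
    ((Lg1V ρ δ γ) ^ 2 + (Lg2V δ γ) ^ 2)

/-!
The gain `n'(V) / (1 + n V)` is positive for `ρ > 0`, so `V̇_a` is a negative multiple of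
`(L_{ḡ₁}V)² + (L_{g₂}V)²`. Both Lie derivatives cannot vanish at once when `ρ > 0`:
`L_{g₂}V = 0` forces `γ = -arctan(2δ)/2 ∈ (-π/4, π/4)`, so `cos γ > 0` and `sin γ` has the sign
of `-δ`, and then `L_{ḡ₁}V = -2 (ρ² cos γ - δ sin γ) < 0`.
-/

open Real

lemma V_pos {ρ δ γ : ℝ} (hρ : 0 < ρ) : 0 < V ρ δ γ := by
  unfold V
  positivity

lemma div_one_add_pos_of_strictMonoOn {n : ℝ → ℝ} (hmono : StrictMonoOn n (Set.Ici 0))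
    (h0 : n 0 = 0) {x : ℝ} (hx : 0 < x) (hd : 0 < deriv n x) : 0 < deriv n x / (1 + n x) := by
  have hnx : 0 < n x := h0 ▸ hmono Set.self_mem_Ici (Set.mem_Ici.mpr hx.le) hx
  positivity

section ZeroLevel

variable {δ γ : ℝ}

lemma eq_of_z_eq_zero (h : z δ γ = 0) : γ = -(arctan (2 * δ) / 2) := by
  unfold z at h
  linarith

lemma cos_pos_of_z_eq_zero (h : z δ γ = 0) : 0 < cos γ := by
  have := neg_pi_div_two_lt_arctan (2 * δ)
  have := arctan_lt_pi_div_two (2 * δ)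
  apply cos_pos_of_mem_Ioo
  constructor <;> linarith [eq_of_z_eq_zero h, pi_pos]

lemma mul_sin_nonpos_of_z_eq_zero (h : z δ γ = 0) : δ * sin γ ≤ 0 := by
  have hγ := eq_of_z_eq_zero h
  have := neg_pi_div_two_lt_arctan (2 * δ)
  have := arctan_lt_pi_div_two (2 * δ)
  rcases le_total 0 δ with hδ | hδ
  · have : 0 ≤ arctan (2 * δ) := arctan_nonneg.mpr (by linarith)
    exact mul_nonpos_of_nonneg_of_nonpos hδ
      (sin_nonpos_of_nonpos_of_neg_pi_le (by linarith) (by linarith [pi_pos]))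
  · have : arctan (2 * δ) ≤ 0 := arctan_le_zero.mpr (by linarith)
    exact mul_nonpos_of_nonpos_of_nonneg hδ
      (sin_nonneg_of_nonneg_of_le_pi (by linarith) (by linarith [pi_pos]))

lemma Lg1V_neg_of_z_eq_zero {ρ : ℝ} (hρ : 0 < ρ) (h : z δ γ = 0) : Lg1V ρ δ γ < 0 := by
  have hcos := mul_pos (pow_pos hρ 2) (cos_pos_of_z_eq_zero h)
  have hsin := mul_sin_nonpos_of_z_eq_zero h
  unfold Lg1V
  rw [h]
  nlinarith

end ZeroLevel

lemma not_Lg1V_eq_zero_and_Lg2V_eq_zero {ρ δ γ : ℝ} (hρ : 0 < ρ) :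
    ¬ (Lg1V ρ δ γ = 0 ∧ Lg2V δ γ = 0) := by
  rintro ⟨h1, h2⟩
  have hz : z δ γ = 0 := by
    unfold Lg2V at h2
    linarith
  exact (Lg1V_neg_of_z_eq_zero hρ hz).ne h1

theorem adaptive_lyapunov_derivative_general
    (n : ℝ → ℝ)
    -- n is class K∞ and C¹ with n' > 0 on (0,∞)
    (hKm : StrictMonoOn n (Set.Ici 0))
    (hK0 : n 0 = 0)
    (hn' : ∀ x : ℝ, 0 < x → 0 < deriv n x) :
    (∀ ρ δ γ : ℝ, 0 < ρ → Vadot n ρ δ γ ≤ 0) ∧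
    (∀ ρ δ γ : ℝ, 0 < ρ → Vadot n ρ δ γ = 0 →
        Lg1V ρ δ γ = 0 ∧ Lg2V δ γ = 0) ∧
    (∀ ρ δ γ : ℝ, 0 < ρ → Lg1V ρ δ γ = 0 → Lg2V δ γ = 0 →
        (ρ, δ, γ) = ((0 : ℝ), (0 : ℝ), (0 : ℝ))) ∧
    (∀ ρ δ γ : ℝ, 0 < ρ → (ρ, δ, γ) ≠ ((0:ℝ), (0:ℝ), (0:ℝ)) →
        Vadot n ρ δ γ < 0) := by
  have hgain : ∀ ρ δ γ : ℝ, 0 < ρ → 0 < deriv n (V ρ δ γ) / (1 + n (V ρ δ γ)) :=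
    fun ρ δ γ hρ => div_one_add_pos_of_strictMonoOn hKm hK0 (V_pos hρ) (hn' _ (V_pos hρ))
  have hzero : ∀ ρ δ γ : ℝ, 0 < ρ → Vadot n ρ δ γ = 0 → Lg1V ρ δ γ = 0 ∧ Lg2V δ γ = 0 := by
    intro ρ δ γ hρ h
    rcases mul_eq_zero.mp h with hc | hs
    · exact absurd (neg_eq_zero.mp hc) (hgain ρ δ γ hρ).ne'
    · exact mul_self_add_mul_self_eq_zero.mp (by simpa only [sq] using hs)
  have hnonpos : ∀ ρ δ γ : ℝ, 0 < ρ → Vadot n ρ δ γ ≤ 0 := fun ρ δ γ hρ =>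
    mul_nonpos_of_nonpos_of_nonneg (neg_nonpos.mpr (hgain ρ δ γ hρ).le) (by positivity)
  refine ⟨hnonpos, hzero, ?_, ?_⟩
  · exact fun ρ δ γ hρ h1 h2 => absurd ⟨h1, h2⟩ (not_Lg1V_eq_zero_and_Lg2V_eq_zero hρ)
  · exact fun ρ δ γ hρ _ => (hnonpos ρ δ γ hρ).lt_of_ne fun h =>
      not_Lg1V_eq_zero_and_Lg2V_eq_zero hρ (hzero ρ δ γ hρ h)

theorem adaptive_lyapunov_derivative
    (n : ℝ → ℝ)
    -- n is class K∞ and C¹ with n' > 0 on (0,∞)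
    (hKc : ContinuousOn n (Set.Ici 0)) (hKm : StrictMonoOn n (Set.Ici 0))
    (hK0 : n 0 = 0) (hKinf : Filter.Tendsto n Filter.atTop Filter.atTop)
    (hC1 : ContDiff ℝ 1 n)
    (hn' : ∀ x : ℝ, 0 < x → 0 < deriv n x) :
    (∀ ρ δ γ : ℝ, 0 < ρ → Vadot n ρ δ γ ≤ 0) ∧
    (∀ ρ δ γ : ℝ, 0 < ρ → Vadot n ρ δ γ = 0 →
        Lg1V ρ δ γ = 0 ∧ Lg2V δ γ = 0) ∧
    (∀ ρ δ γ : ℝ, 0 < ρ → Lg1V ρ δ γ = 0 → Lg2V δ γ = 0 →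
        (ρ, δ, γ) = ((0 : ℝ), (0 : ℝ), (0 : ℝ))) ∧
    (∀ ρ δ γ : ℝ, 0 < ρ → (ρ, δ, γ) ≠ ((0:ℝ), (0:ℝ), (0:ℝ)) →
        Vadot n ρ δ γ < 0) :=
  adaptive_lyapunov_derivative_general n hKm hK0 hn'
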